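/- A ⋆-metric space (X, d⋆) is compact (in the topology induced by d⋆) if and only if it is complete and totally bounded. -/
import Mathlib


/-- A t-definer: commutative, associative, monotone, identity 0, continuous in
its first component (on the relevant domain `[0,∞)`). -/
structure IsTDefiner (star : ℝ → ℝ → ℝ) : Prop where
  nonneg : ∀ a b, 0 ≤ a → 0 ≤ b → 0 ≤ star a b
  comm : ∀ a b, 0 ≤ a → 0 ≤ b → star a b = star b a
  assoc : ∀ a b c, 0 ≤ a → 0 ≤ b → 0 ≤ c → star a (star b c) = star (star a b) c
  mono : ∀ a b c, 0 ≤ a → 0 ≤ b → 0 ≤ c → a ≤ b → star a c ≤ star b c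
  zero_id : ∀ a, 0 ≤ a → star a 0 = a
  cont : ∀ b, 0 ≤ b → ContinuousOn (fun a => star a b) (Set.Ici (0 : ℝ))

/-- A ⋆-metric with respect to the t-definer `star`. -/
structure IsStarMetric (star : ℝ → ℝ → ℝ) {X : Type*} (d : X → X → ℝ) : Prop where
  nonneg : ∀ x y, 0 ≤ d x y
  eq_zero_iff : ∀ x y, d x y = 0 ↔ x = y
  symm : ∀ x y, d x y = d y x
  star_triangle : ∀ x y z, d x y ≤ star (d x z) (d z y)

/-- The topology induced by the open balls of a ⋆-metric. -/
def starTop {X : Type*} (d : X → X → ℝ) : TopologicalSpace X where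
  IsOpen U := ∀ a ∈ U, ∃ r > 0, {x | d a x < r} ⊆ U
  isOpen_univ := fun _ _ => ⟨1, one_pos, fun _ _ => trivial⟩
  isOpen_inter := by
    intro U V hU hV a ha
    obtain ⟨r1, hr1, h1⟩ := hU a ha.1
    obtain ⟨r2, hr2, h2⟩ := hV a ha.2
    refine ⟨min r1 r2, lt_min hr1 hr2, fun x hx => ?_⟩
    have hx' : d a x < min r1 r2 := hx
    exact ⟨h1 (show d a x < r1 from lt_of_lt_of_le hx' (min_le_left _ _)),
      h2 (show d a x < r2 from lt_of_lt_of_le hx' (min_le_right _ _))⟩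
  isOpen_sUnion := by
    intro S hS a ha
    obtain ⟨U, hU, haU⟩ := ha
    obtain ⟨r, hr, h⟩ := hS U hU a haU
    exact ⟨r, hr, fun x hx => ⟨U, hU, h hx⟩⟩

/-- Total boundedness of a subset `M` of a ⋆-metric space. -/
def StarTotallyBoundedOn {X : Type*} (d : X → X → ℝ) (M : Set X) : Prop :=
  ∀ ε > 0, ∃ F : Finset X, ↑F ⊆ M ∧ ∀ x ∈ M, ∃ y ∈ F, d y x < ε

/-- Total boundedness of a ⋆-metric space. -/
def StarTotallyBounded {X : Type*} (d : X → X → ℝ) : Prop :=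
  ∀ ε > 0, ∃ F : Finset X, ∀ x : X, ∃ y ∈ F, d y x < ε

/-- Cauchy sequence in a ⋆-metric space. -/
def StarCauchy {X : Type*} (d : X → X → ℝ) (x : ℕ → X) : Prop :=
  ∀ ε > 0, ∃ k, ∀ m ≥ k, ∀ n ≥ k, d (x m) (x n) < ε

/-- Convergence of a sequence to a point in a ⋆-metric space. -/
def StarConvTo {X : Type*} (d : X → X → ℝ) (x : ℕ → X) (x₀ : X) : Prop :=
  ∀ ε > 0, ∃ k, ∀ n ≥ k, d (x n) x₀ < ε

/-- Completeness of a ⋆-metric space. -/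
def StarComplete {X : Type*} (d : X → X → ℝ) : Prop :=
  ∀ x : ℕ → X, StarCauchy d x → ∃ x₀, StarConvTo d x x₀

lemma star_small {star : ℝ → ℝ → ℝ} (ht : IsTDefiner star) {ε : ℝ} (hε : 0 < ε) :
    ∃ δ > 0, ∀ a b, 0 ≤ a → 0 ≤ b → a < δ → b < δ → star a b < ε := by
  have h2 : (0:ℝ) < ε / 2 := by linarith
  have hc : ContinuousWithinAt (fun a => star a (ε / 2)) (Set.Ici 0) 0 :=
    ht.cont (ε / 2) h2.le 0 (by simp)
  have h0 : star 0 (ε / 2) = ε / 2 := by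
    rw [ht.comm 0 (ε/2) le_rfl h2.le, ht.zero_id _ h2.le]
  have hmem : {a : ℝ | star a (ε / 2) < ε} ∈ nhdsWithin (0:ℝ) (Set.Ici 0) := by
    have : Set.Iio ε ∈ nhds (star 0 (ε/2)) := by
      rw [h0]; exact Iio_mem_nhds (by linarith)
    exact hc this
  rw [Metric.mem_nhdsWithin_iff] at hmem
  obtain ⟨δ₀, hδ₀, hsub⟩ := hmem
  refine ⟨min (δ₀ / 2) (ε / 2), lt_min (by linarith) h2, ?_⟩
  set δ := min (δ₀ / 2) (ε / 2) with hδdef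
  intro a b ha hb haδ hbδ
  have hδpos : 0 < δ := lt_min (by linarith) h2
  have h1 : star a b ≤ star δ b := ht.mono a δ b ha hδpos.le hb haδ.le
  have h2' : star δ b ≤ star δ δ := by
    rw [ht.comm δ b hδpos.le hb]
    exact ht.mono b δ δ hb hδpos.le hδpos.le hbδ.le
  have h3 : star δ δ ≤ star δ (ε / 2) := by
    rw [ht.comm δ δ hδpos.le hδpos.le, ht.comm δ (ε/2) hδpos.le h2.le]
    exact ht.mono δ (ε/2) δ hδpos.le h2.le hδpos.le (min_le_right _ _)
  have h4 : star δ (ε / 2) < ε := by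
    have : δ ∈ Metric.ball (0:ℝ) δ₀ ∩ Set.Ici 0 := by
      constructor
      · simp only [Metric.mem_ball, Real.dist_eq, sub_zero, abs_of_nonneg hδpos.le]
        calc δ ≤ δ₀ / 2 := min_le_left _ _
        _ < δ₀ := by linarith
      · exact hδpos.le
    exact hsub this
  linarith

open Filter Set Uniformity Topology in
theorem compact_iff_complete_totallyBounded {X : Type*} (star : ℝ → ℝ → ℝ)
    (d : X → X → ℝ) (ht : IsTDefiner star) (hd : IsStarMetric star d) :
    @CompactSpace X (starTop d) ↔ StarComplete d ∧ StarTotallyBounded d := by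
  classical
  set S : ℝ → Set (X × X) := fun ε => {p : X × X | d p.1 p.2 < ε} with hSdef
  have hdxx : ∀ x : X, d x x = 0 := fun x => (hd.eq_zero_iff x x).mpr rfl
  have hB : (⨅ (ε : ℝ) (_ : 0 < ε), 𝓟 (S ε)).HasBasis (fun ε : ℝ => 0 < ε) S :=
    Filter.hasBasis_biInf_principal'
      (fun ε1 h1 ε2 h2 => ⟨min ε1 ε2, lt_min h1 h2,
        fun p (hp : d p.1 p.2 < min ε1 ε2) =>
          show d p.1 p.2 < ε1 from lt_of_lt_of_le hp (min_le_left _ _),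
        fun p (hp : d p.1 p.2 < min ε1 ε2) =>
          show d p.1 p.2 < ε2 from lt_of_lt_of_le hp (min_le_right _ _)⟩) ⟨1, one_pos⟩
  let core : UniformSpace.Core X := UniformSpace.Core.mk'
    (⨅ (ε : ℝ) (_ : 0 < ε), 𝓟 (S ε))
    (by
      intro r hr x
      obtain ⟨ε, hε, hsub⟩ := hB.mem_iff.mp hr
      exact hsub (by simp only [S, Set.mem_setOf_eq, hdxx]; exact hε))
    (by
      intro r hr
      obtain ⟨ε, hε, hsub⟩ := hB.mem_iff.mp hr
      exact hB.mem_iff.mpr ⟨ε, hε, fun p hp => hsub (by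
        simp only [S, Set.mem_setOf_eq] at hp ⊢
        rwa [hd.symm])⟩)
    (by
      intro r hr
      obtain ⟨ε, hε, hsub⟩ := hB.mem_iff.mp hr
      obtain ⟨δ, hδ, hstar⟩ := star_small ht hε
      refine ⟨S δ, hB.mem_of_mem hδ, fun p hp => ?_⟩
      obtain ⟨y, h1, h2⟩ := hp
      refine hsub ?_
      simp only [S, Set.mem_setOf_eq] at h1 h2 ⊢
      calc d p.1 p.2 ≤ star (d p.1 y) (d y p.2) := hd.star_triangle _ _ _
        _ < ε := hstar _ _ (hd.nonneg _ _) (hd.nonneg _ _) h1 h2)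
  letI U : UniformSpace X := UniformSpace.ofCore core
  have hB' : (𝓤 X).HasBasis (fun ε : ℝ => 0 < ε) S := hB
  have htop : starTop d = U.toTopologicalSpace := by
    refine TopologicalSpace.ext_iff.mpr fun s => ?_
    rw [isOpen_uniformity]
    show (∀ a ∈ s, ∃ r > 0, {x | d a x < r} ⊆ s) ↔ _
    constructor
    · intro h x hx
      obtain ⟨r, hr, hsub⟩ := h x hx
      refine hB'.mem_iff.mpr ⟨r, hr, fun p hp hpx => ?_⟩
      exact hsub (by simp only [Set.mem_setOf_eq]; rw [← hpx]; exact hp)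
    · intro h a ha
      obtain ⟨ε, hε, hsub⟩ := hB'.mem_iff.mp (h a ha)
      exact ⟨ε, hε, fun x hx => @hsub (a, x) hx rfl⟩
  rw [htop]
  haveI hcg : (𝓤 X).IsCountablyGenerated := by
    have hnat : (𝓤 X).HasBasis (fun _ : ℕ => True) (fun n => S (1 / (n + 1))) :=
      hB'.to_hasBasis
        (fun ε hε => by
          obtain ⟨n, hn⟩ := exists_nat_one_div_lt hε
          exact ⟨n, trivial, fun p hp => lt_trans hp hn⟩)
        (fun n _ => ⟨1 / (n + 1), by positivity, subset_rfl⟩)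
    exact hnat.isCountablyGenerated
  have hcauchy : ∀ u : ℕ → X, CauchySeq u ↔ StarCauchy d u := fun u => hB'.cauchySeq_iff
  have htend : ∀ (u : ℕ → X) (x₀ : X),
      Tendsto u atTop (𝓝 x₀) ↔ StarConvTo d u x₀ := by
    intro u x₀
    rw [(nhds_basis_uniformity' hB').tendsto_right_iff]
    constructor
    · intro h ε hε
      obtain ⟨k, hk⟩ := (h ε hε).exists_forall_of_atTop
      exact ⟨k, fun n hn => by rw [hd.symm]; exact hk n hn⟩
    · intro h ε hε
      obtain ⟨k, hk⟩ := h ε hε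
      exact eventually_atTop.mpr ⟨k, fun n hn => show d x₀ (u n) < ε by
        rw [hd.symm]; exact hk n hn⟩
  have hcompl : CompleteSpace X ↔ StarComplete d := by
    constructor
    · intro hC u hu
      obtain ⟨x₀, hx₀⟩ := cauchySeq_tendsto_of_complete ((hcauchy u).mpr hu)
      exact ⟨x₀, (htend u x₀).mp hx₀⟩
    · intro h
      exact UniformSpace.complete_of_cauchySeq_tendsto fun u hu =>
        let ⟨x₀, hx⟩ := h u ((hcauchy u).mp hu)
        ⟨x₀, (htend u x₀).mpr hx⟩
  have htb : TotallyBounded (Set.univ : Set X) ↔ StarTotallyBounded d := by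
    rw [hB'.totallyBounded_iff]
    constructor
    · intro h ε hε
      obtain ⟨t, htfin, hcover⟩ := h ε hε
      refine ⟨htfin.toFinset, fun x => ?_⟩
      obtain ⟨y, hy, hxy⟩ := Set.mem_iUnion₂.mp (hcover (Set.mem_univ x))
      exact ⟨y, htfin.mem_toFinset.mpr hy, by rw [hd.symm]; exact hxy⟩
    · intro h ε hε
      obtain ⟨F, hF⟩ := h ε hε
      refine ⟨↑F, F.finite_toSet, fun x _ => ?_⟩
      obtain ⟨y, hy, hyx⟩ := hF x
      exact Set.mem_iUnion₂.mpr ⟨y, hy, show d x y < ε by rw [hd.symm]; exact hyx⟩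
  rw [← isCompact_univ_iff, isCompact_iff_totallyBounded_isComplete,
    ← completeSpace_iff_isComplete_univ, hcompl, htb, and_comm]
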